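/- Let M ∈ ℝ^{m×d} satisfy the robust ℓ₂-stable Ω-null space property of order s with constants 0 < ρ < 1 and τ > 0, where Ω ∈ ℝ^{p×d} is a frame with lower frame bound A > 0. Then for any x ∈ ℝ^d and measurements y = Mx + w with ‖w‖₂ ≤ η, any minimizer x̂ of ‖Ωz‖₁ subject to ‖Mz − y‖₂ ≤ η satisfies ‖x − x̂‖₂ ≤ (2(1+ρ)²/(√A(1−ρ)))·σ_s(Ωx)₁/√s + (2τ(3+ρ)/(√A(1−ρ)))·η. -/
import Mathlib


noncomputable section

def l1 {n : ℕ} (v : Fin n → ℝ) : ℝ := ∑ i, |v i|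

def l2 {n : ℕ} (v : Fin n → ℝ) : ℝ := Real.sqrt (∑ i, (v i) ^ 2)

def l1S {n : ℕ} (v : Fin n → ℝ) (Λ : Finset (Fin n)) : ℝ := ∑ i ∈ Λ, |v i|

def l2S {n : ℕ} (v : Fin n → ℝ) (Λ : Finset (Fin n)) : ℝ :=
  Real.sqrt (∑ i ∈ Λ, (v i) ^ 2)

def mulVec' {m d : ℕ} (M : Fin m → Fin d → ℝ) (x : Fin d → ℝ) : Fin m → ℝ :=
  fun i => ∑ j, M i j * x j

/-- Robust ℓ²-stable `Ω`-null space property. -/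
def robustL2StableOmegaNSP {m d p : ℕ} (M : Fin m → Fin d → ℝ)
    (Ω : Fin p → Fin d → ℝ) (s : ℕ) (ρ τ : ℝ) : Prop :=
  ∀ Λ : Finset (Fin p), p - s ≤ Λ.card →
    ∀ v : Fin d → ℝ,
      l2S (mulVec' Ω v) Λᶜ ≤ ρ / Real.sqrt s * l1S (mulVec' Ω v) Λ + τ * l2 (mulVec' M v)

def sigma1 {n : ℕ} (u : Fin n → ℝ) (s : ℕ) : ℝ :=
  sInf {r : ℝ | ∃ w : Fin n → ℝ,
    (Finset.univ.filter (fun i => w i ≠ 0)).card ≤ s ∧ r = l1 (u - w)}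

lemma mulVec'_sub {m d : ℕ} (M : Fin m → Fin d → ℝ) (x y : Fin d → ℝ) :
    mulVec' M (x - y) = mulVec' M x - mulVec' M y := by
  funext i
  simp [mulVec', mul_sub, Finset.sum_sub_distrib]

lemma l1_nonneg {n : ℕ} (v : Fin n → ℝ) : 0 ≤ l1 v :=
  Finset.sum_nonneg fun _ _ => abs_nonneg _

lemma l1S_nonneg {n : ℕ} (v : Fin n → ℝ) (Λ : Finset (Fin n)) : 0 ≤ l1S v Λ :=
  Finset.sum_nonneg fun _ _ => abs_nonneg _

lemma l2_nonneg {n : ℕ} (v : Fin n → ℝ) : 0 ≤ l2 v := Real.sqrt_nonneg _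
lemma l2S_nonneg {n : ℕ} (v : Fin n → ℝ) (Λ : Finset (Fin n)) : 0 ≤ l2S v Λ :=
  Real.sqrt_nonneg _

lemma l1_split {n : ℕ} (v : Fin n → ℝ) (Λ : Finset (Fin n)) :
    l1 v = l1S v Λ + l1S v Λᶜ :=
  (Finset.sum_add_sum_compl Λ _).symm

lemma l1S_le_l1 {n : ℕ} (v : Fin n → ℝ) (Λ : Finset (Fin n)) : l1S v Λ ≤ l1 v := by
  rw [l1_split v Λ]
  linarith [l1S_nonneg v Λᶜ]

lemma sqrt_add_le' {a b : ℝ} (ha : 0 ≤ a) (hb : 0 ≤ b) :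
    Real.sqrt (a + b) ≤ Real.sqrt a + Real.sqrt b := by
  rw [show a + b = a + b by rfl]
  have h1 := Real.sq_sqrt ha
  have h2 := Real.sq_sqrt hb
  have h3 := Real.sqrt_nonneg a
  have h4 := Real.sqrt_nonneg b
  rw [show Real.sqrt a + Real.sqrt b =
      Real.sqrt ((Real.sqrt a + Real.sqrt b) ^ 2) from
    (Real.sqrt_sq (by positivity)).symm]
  apply Real.sqrt_le_sqrt
  nlinarith

lemma l2_split_le {n : ℕ} (v : Fin n → ℝ) (Λ : Finset (Fin n)) :
    l2 v ≤ l2S v Λ + l2S v Λᶜ := by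
  have h : (∑ i, (v i) ^ 2) = (∑ i ∈ Λ, (v i) ^ 2) + ∑ i ∈ Λᶜ, (v i) ^ 2 :=
    (Finset.sum_add_sum_compl Λ _).symm
  rw [l2, h]
  exact sqrt_add_le' (Finset.sum_nonneg fun _ _ => sq_nonneg _)
    (Finset.sum_nonneg fun _ _ => sq_nonneg _)

lemma l1S_le_sqrt_card {n : ℕ} (v : Fin n → ℝ) (Λ : Finset (Fin n)) :
    l1S v Λ ≤ Real.sqrt Λ.card * l2S v Λ := by
  have := Real.sum_mul_le_sqrt_mul_sqrt Λ (fun _ => (1 : ℝ)) (fun i => |v i|)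
  simpa [l1S, l2S, sq_abs] using this

lemma l2_triangle {n : ℕ} (a b : Fin n → ℝ) : l2 (a + b) ≤ l2 a + l2 b := by
  have hcs := Real.sum_mul_le_sqrt_mul_sqrt Finset.univ a b
  have h1 : (0:ℝ) ≤ ∑ i, (a i) ^ 2 := Finset.sum_nonneg fun _ _ => sq_nonneg _
  have h2 : (0:ℝ) ≤ ∑ i, (b i) ^ 2 := Finset.sum_nonneg fun _ _ => sq_nonneg _
  have hnn : 0 ≤ l2 a + l2 b := add_nonneg (l2_nonneg a) (l2_nonneg b)
  rw [l2, show l2 a + l2 b = Real.sqrt ((l2 a + l2 b) ^ 2) from (Real.sqrt_sq hnn).symm]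
  apply Real.sqrt_le_sqrt
  have ha := Real.sq_sqrt h1
  have hb := Real.sq_sqrt h2
  have hexp : ∑ i, ((a + b) i) ^ 2
      = (∑ i, (a i)^2) + 2 * (∑ i, a i * b i) + ∑ i, (b i)^2 := by
    rw [show (∑ i, ((a + b) i) ^ 2) = ∑ i, ((a i)^2 + 2*(a i * b i) + (b i)^2) from
      Finset.sum_congr rfl fun i _ => by simp only [Pi.add_apply]; ring]
    rw [Finset.sum_add_distrib, Finset.sum_add_distrib, Finset.mul_sum]
  rw [hexp]
  simp only [l2]
  nlinarith [Real.sqrt_nonneg (∑ i, (a i)^2), Real.sqrt_nonneg (∑ i, (b i)^2)]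

lemma l2_neg {n : ℕ} (a : Fin n → ℝ) : l2 (-a) = l2 a := by
  simp [l2]

lemma exists_topset {p : ℕ} (f : Fin p → ℝ) (k : ℕ) (hk : k ≤ p) :
    ∃ S : Finset (Fin p), S.card = k ∧ ∀ i ∉ S, ∀ j ∈ S, f i ≤ f j := by
  induction k with
  | zero => exact ⟨∅, rfl, by simp⟩
  | succ n ih =>
    obtain ⟨S, hcard, hprop⟩ := ih (Nat.le_of_succ_le hk)
    have hne : Sᶜ.Nonempty := by
      rw [← Finset.card_pos, Finset.card_compl, hcard]
      simp only [Fintype.card_fin]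
      omega
    obtain ⟨mx, hmx, hmax⟩ := Sᶜ.exists_max_image f hne
    have hmxS : mx ∉ S := Finset.mem_compl.mp hmx
    refine ⟨insert mx S, by rw [Finset.card_insert_of_notMem hmxS, hcard], ?_⟩
    intro i hi j hj
    have hiS : i ∉ S := fun h => hi (Finset.mem_insert_of_mem h)
    rcases Finset.mem_insert.mp hj with rfl | hjS
    · exact hmax i (Finset.mem_compl.mpr hiS)
    · exact hprop i hiS j hjS

lemma csInf_bound {S : Set ℝ} (hne : S.Nonempty) {c e t : ℝ} (hc : 0 < c)
    (h : ∀ r ∈ S, t ≤ c * r + e) : t ≤ c * sInf S + e := by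
  have h1 : (t - e) / c ≤ sInf S := by
    apply le_csInf hne
    intro r hr
    rw [div_le_iff₀ hc]
    nlinarith [h r hr]
  nlinarith [mul_le_mul_of_nonneg_left h1 hc.le, mul_div_cancel₀ (t - e) hc.ne']

theorem robust_nsp_recovery {m d p s : ℕ}
    (M : Fin m → Fin d → ℝ) (Ω : Fin p → Fin d → ℝ) (A ρ τ η : ℝ)
    (hA : 0 < A)
    (hframe : ∀ v : Fin d → ℝ, A * (l2 v) ^ 2 ≤ (l2 (mulVec' Ω v)) ^ 2)
    (hρ0 : 0 < ρ) (hρ1 : ρ < 1) (hτ : 0 < τ) (hs : 1 ≤ s) (hη : 0 ≤ η)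
    (hNSP : robustL2StableOmegaNSP M Ω s ρ τ)
    (x xhat : Fin d → ℝ) (w y : Fin m → ℝ)
    (hy : y = mulVec' M x + w) (hw : l2 w ≤ η)
    (hfeas : l2 (mulVec' M xhat - y) ≤ η)
    (hmin : ∀ z : Fin d → ℝ, l2 (mulVec' M z - y) ≤ η →
      l1 (mulVec' Ω xhat) ≤ l1 (mulVec' Ω z)) :
    l2 (x - xhat) ≤
      2 * (1 + ρ) ^ 2 / (Real.sqrt A * (1 - ρ)) * (sigma1 (mulVec' Ω x) s / Real.sqrt s) +
        2 * τ * (3 + ρ) / (Real.sqrt A * (1 - ρ)) * η := by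
  have hss : (0:ℝ) < Real.sqrt s :=
    Real.sqrt_pos.mpr (by exact_mod_cast Nat.lt_of_lt_of_le Nat.zero_lt_one hs)
  have hsA : (0:ℝ) < Real.sqrt A := Real.sqrt_pos.mpr hA
  have h1ρ : (0:ℝ) < 1 - ρ := by linarith
  set u : Fin p → ℝ := mulVec' Ω x - mulVec' Ω xhat with hu
  have huv : mulVec' Ω (x - xhat) = u := by rw [hu]; exact mulVec'_sub Ω x xhat
  set E : ℝ := τ * l2 (mulVec' M (x - xhat)) with hE
  have hE0 : 0 ≤ E := mul_nonneg hτ.le (l2_nonneg _)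
  -- bound on the measurement error of the difference
  have hMv : mulVec' M (x - xhat) = -((mulVec' M xhat - y) + w) := by
    rw [mulVec'_sub, hy]
    funext i
    simp only [Pi.sub_apply, Pi.add_apply, Pi.neg_apply]
    ring
  have hE2 : E ≤ 2 * τ * η := by
    have h2η : l2 (mulVec' M (x - xhat)) ≤ 2 * η := by
      rw [hMv, l2_neg]
      calc l2 ((mulVec' M xhat - y) + w) ≤ l2 (mulVec' M xhat - y) + l2 w :=
            l2_triangle _ _
        _ ≤ η + η := add_le_add hfeas hw
        _ = 2 * η := by ring
    rw [hE]
    have := mul_le_mul_of_nonneg_left h2η hτ.le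
    linarith
  -- x is feasible, so minimality applies
  have hxf : l2 (mulVec' M x - y) ≤ η := by
    have hxy : mulVec' M x - y = -w := by
      rw [hy]; funext i; simp
    rw [hxy, l2_neg]; exact hw
  have hba : l1 (mulVec' Ω xhat) ≤ l1 (mulVec' Ω x) := hmin x hxf
  -- NSP specialized to small sets
  have hNSP' : ∀ T : Finset (Fin p), T.card ≤ s →
      l2S u T ≤ ρ / Real.sqrt s * l1S u Tᶜ + E := by
    intro T hT
    have hcard : p - s ≤ Tᶜ.card := by
      rw [Finset.card_compl]
      simp only [Fintype.card_fin]
      omega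
    have h := hNSP Tᶜ hcard (x - xhat)
    rwa [compl_compl, huv] at h
  -- ℓ¹ version of the NSP
  have hL1NSP : ∀ T : Finset (Fin p), T.card ≤ s →
      l1S u T ≤ ρ * l1S u Tᶜ + Real.sqrt s * E := by
    intro T hT
    have h1 : l1S u T ≤ Real.sqrt T.card * l2S u T := l1S_le_sqrt_card u T
    have h2 : Real.sqrt (T.card : ℝ) ≤ Real.sqrt s :=
      Real.sqrt_le_sqrt (by exact_mod_cast hT)
    have h3 := hNSP' T hT
    have h5 : Real.sqrt (T.card : ℝ) * l2S u T ≤ Real.sqrt s * l2S u T :=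
      mul_le_mul_of_nonneg_right h2 (l2S_nonneg u T)
    have h6 : Real.sqrt s * l2S u T ≤ Real.sqrt s * (ρ / Real.sqrt s * l1S u Tᶜ + E) :=
      mul_le_mul_of_nonneg_left h3 hss.le
    have h7 : Real.sqrt s * (ρ / Real.sqrt s * l1S u Tᶜ + E)
        = ρ * l1S u Tᶜ + Real.sqrt s * E := by
      field_simp
    linarith
  -- ℓ² norm controlled by ℓ¹ norm
  have hl2l1 : Real.sqrt s * l2 u ≤ (1 + ρ) * l1 u + Real.sqrt s * E := by
    obtain ⟨S, hScard, hStop⟩ := exists_topset (fun i => |u i|) (min s p) (min_le_right _ _)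
    have hSle : S.card ≤ s := hScard ▸ min_le_left s p
    have hsplit := l2_split_le u S
    have h3 := hNSP' S hSle
    have hl1c : l1S u Sᶜ ≤ l1 u := l1S_le_l1 u Sᶜ
    have hcompl2 : Real.sqrt s * l2S u Sᶜ ≤ l1 u := by
      by_cases hc : Sᶜ = ∅
      · rw [hc]
        simp only [l2S, Finset.sum_empty, Real.sqrt_zero, mul_zero]
        exact l1_nonneg u
      · have hScard_s : S.card = s := by
          rcases Nat.le_total s p with h | h
          · rw [hScard, min_eq_left h]
          · exfalso
            apply hc
            have hcp : S.card = p := by rw [hScard, min_eq_right h]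
            have : S = Finset.univ := Finset.eq_univ_of_card S (by simpa using hcp)
            rw [this, Finset.compl_univ]
        have hkey : ∀ i ∈ Sᶜ, (s:ℝ) * |u i| ≤ l1S u S := by
          intro i hi
          have hle : ∀ j ∈ S, |u i| ≤ |u j| := fun j hj =>
            hStop i (Finset.mem_compl.mp hi) j hj
          have := Finset.card_nsmul_le_sum S (fun j => |u j|) (|u i|) hle
          rw [hScard_s] at this
          simpa [nsmul_eq_mul, l1S] using this
        have hsum : (s:ℝ) * ∑ i ∈ Sᶜ, (u i)^2 ≤ l1S u S * l1S u Sᶜ := by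
          have hmulsum : l1S u S * l1S u Sᶜ = ∑ i ∈ Sᶜ, l1S u S * |u i| := by
            simp only [l1S]
            rw [Finset.mul_sum]
          rw [hmulsum, Finset.mul_sum]
          apply Finset.sum_le_sum
          intro i hi
          have h := hkey i hi
          nlinarith [mul_le_mul_of_nonneg_right h (abs_nonneg (u i)), sq_abs (u i)]
        have hsq : (s:ℝ) * ∑ i ∈ Sᶜ, (u i)^2 ≤ (l1 u)^2 := by
          have hsplit1 := l1_split u S
          nlinarith [l1S_nonneg u S, l1S_nonneg u Sᶜ]
        have hs0 : (0:ℝ) < s := by exact_mod_cast Nat.lt_of_lt_of_le Nat.zero_lt_one hs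
        have h2 : l2S u Sᶜ ≤ l1 u / Real.sqrt s := by
          rw [l2S]
          have hle2 : ∑ i ∈ Sᶜ, (u i)^2 ≤ (l1 u / Real.sqrt s)^2 := by
            rw [div_pow, Real.sq_sqrt hs0.le]
            rw [le_div_iff₀ hs0]
            linarith [hsq]
          calc Real.sqrt (∑ i ∈ Sᶜ, (u i)^2) ≤ Real.sqrt ((l1 u / Real.sqrt s)^2) :=
                Real.sqrt_le_sqrt hle2
            _ = l1 u / Real.sqrt s := Real.sqrt_sq (div_nonneg (l1_nonneg u) hss.le)
        calc Real.sqrt s * l2S u Sᶜ ≤ Real.sqrt s * (l1 u / Real.sqrt s) :=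
              mul_le_mul_of_nonneg_left h2 hss.le
          _ = l1 u := by field_simp
    have hS2 : Real.sqrt s * l2S u S ≤ ρ * l1 u + Real.sqrt s * E := by
      have h6 : Real.sqrt s * l2S u S ≤ Real.sqrt s * (ρ / Real.sqrt s * l1S u Sᶜ + E) :=
        mul_le_mul_of_nonneg_left h3 hss.le
      have h7 : Real.sqrt s * (ρ / Real.sqrt s * l1S u Sᶜ + E)
          = ρ * l1S u Sᶜ + Real.sqrt s * E := by field_simp
      have h8 := mul_le_mul_of_nonneg_left hl1c hρ0.le
      linarith
    have hm : Real.sqrt s * l2 u ≤ Real.sqrt s * (l2S u S + l2S u Sᶜ) :=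
      mul_le_mul_of_nonneg_left hsplit hss.le
    have hmul : Real.sqrt s * (l2S u S + l2S u Sᶜ)
        = Real.sqrt s * l2S u S + Real.sqrt s * l2S u Sᶜ := by ring
    linarith
  -- frame inequality
  have hframe' : Real.sqrt A * l2 (x - xhat) ≤ l2 u := by
    have h := hframe (x - xhat)
    rw [huv] at h
    have h2 := Real.sqrt_le_sqrt h
    rwa [Real.sqrt_mul hA.le, Real.sqrt_sq (l2_nonneg _), Real.sqrt_sq (l2_nonneg _)] at h2
  -- the approximation set
  set Sset : Set ℝ := {r : ℝ | ∃ w' : Fin p → ℝ,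
    (Finset.univ.filter (fun i => w' i ≠ 0)).card ≤ s ∧ r = l1 (mulVec' Ω x - w')}
    with hSset
  have hsig : sigma1 (mulVec' Ω x) s = sInf Sset := rfl
  have hne : Sset.Nonempty := by
    refine ⟨l1 (mulVec' Ω x), 0, ?_, by simp⟩
    simp
  -- ℓ¹ error bound for each competitor
  have hl1bound : ∀ r ∈ Sset, (1 - ρ) * l1 u ≤ 2 * (1 + ρ) * r + 2 * Real.sqrt s * E := by
    rintro r ⟨w', hwcard, rfl⟩
    set T := Finset.univ.filter (fun i => w' i ≠ 0) with hT
    have h1 : l1S (mulVec' Ω x) Tᶜ ≤ l1 (mulVec' Ω x - w') := by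
      have heq : l1S (mulVec' Ω x) Tᶜ = l1S (mulVec' Ω x - w') Tᶜ := by
        apply Finset.sum_congr rfl
        intro i hi
        have hni := Finset.mem_compl.mp hi
        rw [hT] at hni
        simp only [Finset.mem_filter, Finset.mem_univ, true_and, not_not] at hni
        simp [hni]
      rw [heq]
      exact l1S_le_l1 _ _
    have h2 : l1S (mulVec' Ω x) T ≤ l1S (mulVec' Ω xhat) T + l1S u T := by
      simp only [l1S]
      rw [← Finset.sum_add_distrib]
      apply Finset.sum_le_sum
      intro i _
      have hui : mulVec' Ω x i = mulVec' Ω xhat i + u i := by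
        rw [hu]; simp only [Pi.sub_apply]; ring
      rw [hui]
      exact abs_add_le _ _
    have h3 : l1S u Tᶜ ≤ l1S (mulVec' Ω xhat) Tᶜ + l1S (mulVec' Ω x) Tᶜ := by
      simp only [l1S]
      rw [← Finset.sum_add_distrib]
      apply Finset.sum_le_sum
      intro i _
      have hui : u i = mulVec' Ω x i - mulVec' Ω xhat i := by
        rw [hu]; simp only [Pi.sub_apply]
      rw [hui]
      calc |mulVec' Ω x i - mulVec' Ω xhat i| ≤ |mulVec' Ω x i| + |mulVec' Ω xhat i| :=
            abs_sub _ _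
        _ = |mulVec' Ω xhat i| + |mulVec' Ω x i| := add_comm _ _
    have hsplitu := l1_split u T
    have hsplita := l1_split (mulVec' Ω x) T
    have hsplitb := l1_split (mulVec' Ω xhat) T
    have h5 := hL1NSP T hwcard
    have hQ : (1 - ρ) * l1S u Tᶜ ≤ Real.sqrt s * E + 2 * l1 (mulVec' Ω x - w') := by
      linarith
    have hsplitu' : ρ * l1 u = ρ * l1S u T + ρ * l1S u Tᶜ := by rw [hsplitu]; ring
    linarith [mul_le_mul_of_nonneg_left h5 h1ρ.le, mul_le_mul_of_nonneg_left hQ hρ0.le]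
  -- combine everything, for each competitor
  set c : ℝ := 2 * (1 + ρ)^2 / (Real.sqrt A * (1 - ρ) * Real.sqrt s) with hc
  set e : ℝ := 2 * τ * (3 + ρ) / (Real.sqrt A * (1 - ρ)) * η with he
  have hcpos : 0 < c := by rw [hc]; positivity
  have main : ∀ r ∈ Sset, l2 (x - xhat) ≤ c * r + e := by
    intro r hr
    have hr0 : 0 ≤ r := by
      obtain ⟨w', _, rfl⟩ := hr
      exact l1_nonneg _
    have hl1b := hl1bound r hr
    have s1 : Real.sqrt s * (Real.sqrt A * l2 (x - xhat)) ≤ Real.sqrt s * l2 u :=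
      mul_le_mul_of_nonneg_left hframe' hss.le
    have s2 : (1 - ρ) * (Real.sqrt s * l2 u) ≤ (1 - ρ) * ((1 + ρ) * l1 u + Real.sqrt s * E) :=
      mul_le_mul_of_nonneg_left hl2l1 h1ρ.le
    have s3 : (1 + ρ) * ((1 - ρ) * l1 u) ≤ (1 + ρ) * (2 * (1 + ρ) * r + 2 * Real.sqrt s * E) :=
      mul_le_mul_of_nonneg_left hl1b (by linarith)
    have s4 : ((3 + ρ) * Real.sqrt s) * E ≤ ((3 + ρ) * Real.sqrt s) * (2 * τ * η) :=
      mul_le_mul_of_nonneg_left hE2 (by positivity)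
    have key : (Real.sqrt A * (1 - ρ) * Real.sqrt s) * l2 (x - xhat)
        ≤ 2 * (1 + ρ)^2 * r + 2 * τ * (3 + ρ) * Real.sqrt s * η := by
      linarith [mul_le_mul_of_nonneg_left s1 h1ρ.le]
    have hdiv : l2 (x - xhat)
        ≤ (2 * (1 + ρ)^2 * r + 2 * τ * (3 + ρ) * Real.sqrt s * η)
          / (Real.sqrt A * (1 - ρ) * Real.sqrt s) := by
      rw [le_div_iff₀ (by positivity)]
      linarith [key]
    have hce : c * r + e
        = (2 * (1 + ρ)^2 * r + 2 * τ * (3 + ρ) * Real.sqrt s * η)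
          / (Real.sqrt A * (1 - ρ) * Real.sqrt s) := by
      rw [hc, he]
      field_simp
    linarith [hdiv, hce.ge]
  have hfin : l2 (x - xhat) ≤ c * sInf Sset + e := csInf_bound hne hcpos main
  have hfinal : c * sInf Sset + e
      = 2 * (1 + ρ) ^ 2 / (Real.sqrt A * (1 - ρ)) * (sInf Sset / Real.sqrt s) +
        2 * τ * (3 + ρ) / (Real.sqrt A * (1 - ρ)) * η := by
    rw [hc, he]
    field_simp
  rw [hsig]
  linarith [hfin, hfinal.ge]
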